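/- Let $Q$ solve $Q'' + \frac{6}{y}Q' - \frac{3}{y^2}\sin(2Q) = 0$ with $\Lambda Q(y) = yQ'(y) > 0$ on $(0,\infty)$. Define $V = \Lambda \log(\Lambda Q)$, $\mathscr{A} f = -\partial_y f + \frac{V}{y} f$, and $\mathscr{A}^* f = \frac{1}{y^6}\partial_y(y^6 f) + \frac{V}{y} f$. Then $\mathscr{A}^* \mathscr{A} f = -f'' - \frac{6}{y} f' + \frac{Z}{y^2} f$ with $Z = 6\cos(2Q)$, i.e., the linearized operator $\mathscr{L}$ factorizes as $\mathscr{L} = \mathscr{A}^*\mathscr{A}$. -/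

import Mathlib

open Real

/-- Factorization `𝓛 = 𝓐* 𝓐` of the linearized operator at the corotational harmonic map
profile `Q` in dimension 7, where `𝓐 f = -∂_y f + (V/y) f`,
`𝓐* f = y⁻⁶ ∂_y (y⁶ f) + (V/y) f` and `V = Λ log (ΛQ)`. -/
theorem factorization_L (Q : ℝ → ℝ) (hQ : ContDiffOn ℝ (⊤ : ℕ∞) Q (Set.Ioi 0))
    (hODE : ∀ y ∈ Set.Ioi (0 : ℝ),
      deriv (deriv Q) y + 6 / y * deriv Q y - 3 / y ^ 2 * Real.sin (2 * Q y) = 0)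
    (hpos : ∀ y ∈ Set.Ioi (0 : ℝ), 0 < y * deriv Q y)
    (V : ℝ → ℝ)
    (hV : ∀ y ∈ Set.Ioi (0 : ℝ),
      V y = y * deriv (fun z => Real.log (z * deriv Q z)) y) :
    ∀ f : ℝ → ℝ, ContDiffOn ℝ (⊤ : ℕ∞) f (Set.Ioi 0) →
      ∀ y ∈ Set.Ioi (0 : ℝ),
        (fun g : ℝ → ℝ => fun z => (1 / z ^ 6) * deriv (fun t => t ^ 6 * g t) z + V z / z * g z)
            (fun z => -deriv f z + V z / z * f z) y
          = -(deriv (deriv f) y) - 6 / y * deriv f y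
            + (6 * Real.cos (2 * Q y)) / y ^ 2 * f y := by
  have hQ1 : ContDiffOn ℝ (⊤ : ℕ∞) (deriv Q) (Set.Ioi 0) :=
    hQ.deriv_of_isOpen isOpen_Ioi (by simp)
  -- step A: explicit formula for V on (0, ∞)
  have hVform : ∀ z ∈ Set.Ioi (0:ℝ),
      V z = -5 + 3 * Real.sin (2 * Q z) / (z * deriv Q z) := by
    intro z hz
    have hz0 : (0:ℝ) < z := hz
    have hL : 0 < z * deriv Q z := hpos z hz
    have hdQ : HasDerivAt Q (deriv Q z) z :=
      ((hQ.contDiffAt (isOpen_Ioi.mem_nhds hz)).differentiableAt (by simp)).hasDerivAt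
    have hdQ1 : HasDerivAt (deriv Q) (deriv (deriv Q) z) z :=
      ((hQ1.contDiffAt (isOpen_Ioi.mem_nhds hz)).differentiableAt (by simp)).hasDerivAt
    have hLd : HasDerivAt (fun t => t * deriv Q t)
        (deriv Q z + z * deriv (deriv Q) z) z := by
      have h := (hasDerivAt_id z).mul hdQ1
      simpa [Pi.mul_def, Pi.div_def] using h
    have hlog : HasDerivAt (fun t => Real.log (t * deriv Q t))
        ((deriv Q z + z * deriv (deriv Q) z) / (z * deriv Q z)) z := hLd.log hL.ne'
    have hODEz := hODE z hz
    have hQ1ne : deriv Q z ≠ 0 := by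
      intro h; rw [h, mul_zero] at hL; exact lt_irrefl 0 hL
    have hQ2 : deriv (deriv Q) z
        = -(6 / z) * deriv Q z + 3 / z ^ 2 * Real.sin (2 * Q z) := by linarith
    rw [hV z hz, hlog.deriv, hQ2]
    field_simp
    ring
  -- the point
  intro f hf y hy
  have hy0 : (0:ℝ) < y := hy
  have hyne : y ≠ 0 := ne_of_gt hy0
  have hL : 0 < y * deriv Q y := hpos y hy
  have haneg : deriv Q y ≠ 0 := by
    intro h; rw [h, mul_zero] at hL; exact lt_irrefl 0 hL
  set a := deriv Q y with ha
  set b := deriv (deriv Q) y with hb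
  set S := Real.sin (2 * Q y) with hS
  set C := Real.cos (2 * Q y) with hC
  have hnhds : Set.Ioi (0:ℝ) ∈ nhds y := isOpen_Ioi.mem_nhds hy
  -- derivatives at y
  have hdQ : HasDerivAt Q a y :=
    ((hQ.contDiffAt hnhds).differentiableAt (by simp)).hasDerivAt
  have hdQ1 : HasDerivAt (deriv Q) b y :=
    ((hQ1.contDiffAt hnhds).differentiableAt (by simp)).hasDerivAt
  have hf1 : ContDiffOn ℝ (⊤ : ℕ∞) (deriv f) (Set.Ioi 0) :=
    hf.deriv_of_isOpen isOpen_Ioi (by simp)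
  have hdf : HasDerivAt f (deriv f y) y :=
    ((hf.contDiffAt hnhds).differentiableAt (by simp)).hasDerivAt
  have hdf1 : HasDerivAt (deriv f) (deriv (deriv f) y) y :=
    ((hf1.contDiffAt hnhds).differentiableAt (by simp)).hasDerivAt
  -- derivative of V at y via the explicit formula
  have hVeq : V =ᶠ[nhds y] fun z => -5 + 3 * Real.sin (2 * Q z) / (z * deriv Q z) := by
    filter_upwards [hnhds] with z hz using hVform z hz
  have hsin : HasDerivAt (fun z => Real.sin (2 * Q z)) (Real.cos (2 * Q y) * (2 * a)) y := by
    have h2Q : HasDerivAt (fun z => 2 * Q z) (2 * a) y := hdQ.const_mul 2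
    exact (Real.hasDerivAt_sin (2 * Q y)).comp y h2Q
  have hLd : HasDerivAt (fun t => t * deriv Q t) (a + y * b) y := by
    have h := (hasDerivAt_id y).mul hdQ1
    simpa [Pi.mul_def, Pi.div_def] using h
  set v' := (3 * (Real.cos (2 * Q y) * (2 * a)) * (y * a) - 3 * Real.sin (2 * Q y) * (a + y * b)) / (y * a) ^ 2 with hv'
  have hdV : HasDerivAt V v' y := by
    have hdiv : HasDerivAt (fun z => 3 * Real.sin (2 * Q z) / (z * deriv Q z)) v' y :=
      ((hsin.const_mul 3).div hLd hL.ne')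
    have : HasDerivAt (fun z => -5 + 3 * Real.sin (2 * Q z) / (z * deriv Q z)) v' y := by
      simpa using (hdiv.const_add (-5))
    exact this.congr_of_eventuallyEq hVeq
  have hVy : V y = -5 + 3 * S / (y * a) := hVform y hy
  -- derivative of the inner function
  have hVdiv : HasDerivAt (fun z => V z / z) ((v' * y - V y) / y ^ 2) y := by
    have h := hdV.div (hasDerivAt_id y) hyne
    simpa [Pi.mul_def, Pi.div_def] using h
  have hinner : HasDerivAt (fun z => -deriv f z + V z / z * f z)
      (-(deriv (deriv f) y) + ((v' * y - V y) / y ^ 2 * f y + V y / y * deriv f y)) y :=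
    hdf1.neg.add (hVdiv.mul hdf)
  have hpow : HasDerivAt (fun t : ℝ => t ^ 6) (6 * y ^ 5) y := by
    simpa using hasDerivAt_pow 6 y
  have hF : HasDerivAt (fun t => t ^ 6 * (-deriv f t + V t / t * f t))
      (6 * y ^ 5 * (-deriv f y + V y / y * f y)
       + y ^ 6 * (-(deriv (deriv f) y) + ((v' * y - V y) / y ^ 2 * f y + V y / y * deriv f y))) y :=
    hpow.mul hinner
  simp only
  rw [hF.deriv]
  -- key algebraic identity: y v' + 5 V + V² = 6 cos(2Q)
  have hODEy := hODE y hy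
  have hQ2 : b = -(6 / y) * a + 3 / y ^ 2 * S := by
    rw [hb, hS]; linarith
  have key : y * v' + 5 * V y + V y ^ 2 = 6 * C := by
    rw [hv', hVy, hQ2, ← hC]
    field_simp
    ring
  have expand : (1 / y ^ 6) * (6 * y ^ 5 * (-deriv f y + V y / y * f y)
       + y ^ 6 * (-(deriv (deriv f) y) + ((v' * y - V y) / y ^ 2 * f y + V y / y * deriv f y)))
       + V y / y * (-deriv f y + V y / y * f y)
      = -(deriv (deriv f) y) - 6 / y * deriv f y
        + (y * v' + 5 * V y + V y ^ 2) / y ^ 2 * f y := by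
    field_simp
    ring
  rw [expand, key]
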